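/- Suppose real symmetric l×l matrices A₁,…,A_N satisfy Σᵢ⟨Aᵢu,u⟩² = |u|⁴ for all u ∈ ℝ^l. Then Σᵢ(2Aᵢ² + tr(Aᵢ)Aᵢ) = (2+l)I_l, and if additionally Σᵢ tr(Aᵢ²) = l² − lm, then Σᵢ(tr Aᵢ)² = l(2 + 2m − l). -/
import Mathlib


open Matrix

/-- If symmetric matrices `A₁,…,A_N` satisfy `Σᵢ⟨Aᵢu,u⟩² = |u|⁴` for all `u ∈ ℝ^l`,
then `Σᵢ(2Aᵢ² + tr(Aᵢ)Aᵢ) = (2+l)I`; and if moreover `Σᵢ tr(Aᵢ²) = l² − lm`, then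
`Σᵢ(tr Aᵢ)² = l(2 + 2m − l)`. -/
theorem stmt17 (l N : ℕ) (A : Fin N → Matrix (Fin l) (Fin l) ℝ)
    (hsymm : ∀ i, (A i)ᵀ = A i)
    (hid : ∀ u : Fin l → ℝ, ∑ i, ((A i).mulVec u ⬝ᵥ u) ^ 2 = (u ⬝ᵥ u) ^ 2) :
    (∑ i, ((2 : ℝ) • (A i * A i) + (Matrix.trace (A i)) • A i)
        = ((2 + (l : ℝ)) • (1 : Matrix (Fin l) (Fin l) ℝ)))
    ∧ ∀ m : ℝ, (∑ i, Matrix.trace (A i * A i) = (l : ℝ) ^ 2 - (l : ℝ) * m) →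
        ∑ i, (Matrix.trace (A i)) ^ 2 = (l : ℝ) * (2 + 2 * m - (l : ℝ)) := by
  have hAt : ∀ i (p q : Fin l), A i p q = A i q p := by
    intro i p q
    have h := congrFun (congrFun (hsymm i) p) q
    rw [Matrix.transpose_apply] at h
    exact h.symm
  have hsym : ∀ i (u v : Fin l → ℝ), (A i).mulVec v ⬝ᵥ u = (A i).mulVec u ⬝ᵥ v := by
    intro i u v
    rw [dotProduct_comm, dotProduct_mulVec, ← mulVec_transpose, hsymm i]
  -- first polarization: coefficient of t² in hid (u + t v)
  have star : ∀ u v : Fin l → ℝ,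
      ∑ i, (((A i).mulVec u ⬝ᵥ u) * ((A i).mulVec v ⬝ᵥ v)
            + 2 * ((A i).mulVec u ⬝ᵥ v) ^ 2)
        = (u ⬝ᵥ u) * (v ⬝ᵥ v) + 2 * (u ⬝ᵥ v) ^ 2 := by
    intro u v
    have expand : ∀ c : ℝ,
        (∑ i, ((A i).mulVec u ⬝ᵥ u) ^ 2)
        + 4 * c * (∑ i, ((A i).mulVec u ⬝ᵥ u) * ((A i).mulVec u ⬝ᵥ v))
        + 2 * c ^ 2 * (∑ i, (((A i).mulVec u ⬝ᵥ u) * ((A i).mulVec v ⬝ᵥ v)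
              + 2 * ((A i).mulVec u ⬝ᵥ v) ^ 2))
        + 4 * c ^ 3 * (∑ i, ((A i).mulVec u ⬝ᵥ v) * ((A i).mulVec v ⬝ᵥ v))
        + c ^ 4 * (∑ i, ((A i).mulVec v ⬝ᵥ v) ^ 2)
        = ((u ⬝ᵥ u) + 2 * c * (u ⬝ᵥ v) + c ^ 2 * (v ⬝ᵥ v)) ^ 2 := by
      intro c
      have h := hid (u + c • v)
      calc
        (∑ i, ((A i).mulVec u ⬝ᵥ u) ^ 2)
        + 4 * c * (∑ i, ((A i).mulVec u ⬝ᵥ u) * ((A i).mulVec u ⬝ᵥ v))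
        + 2 * c ^ 2 * (∑ i, (((A i).mulVec u ⬝ᵥ u) * ((A i).mulVec v ⬝ᵥ v)
              + 2 * ((A i).mulVec u ⬝ᵥ v) ^ 2))
        + 4 * c ^ 3 * (∑ i, ((A i).mulVec u ⬝ᵥ v) * ((A i).mulVec v ⬝ᵥ v))
        + c ^ 4 * (∑ i, ((A i).mulVec v ⬝ᵥ v) ^ 2)
            = ∑ i, ((A i).mulVec (u + c • v) ⬝ᵥ (u + c • v)) ^ 2 := by
              simp only [Finset.mul_sum, ← Finset.sum_add_distrib]
              refine Finset.sum_congr rfl fun i _ => ?_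
              simp only [mulVec_add, mulVec_smul, add_dotProduct, smul_dotProduct,
                dotProduct_add, dotProduct_smul, smul_eq_mul]
              rw [hsym i u v]
              ring
        _ = ((u + c • v) ⬝ᵥ (u + c • v)) ^ 2 := h
        _ = ((u ⬝ᵥ u) + 2 * c * (u ⬝ᵥ v) + c ^ 2 * (v ⬝ᵥ v)) ^ 2 := by
              simp only [add_dotProduct, smul_dotProduct, dotProduct_add, dotProduct_smul,
                smul_eq_mul]
              rw [dotProduct_comm v u]
              ring
    have e0 := expand 0
    have e1 := expand 1
    have e2 := expand (-1)
    have e3 := expand 2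
    have e4 := expand (-2)
    linear_combination (16 * e1 + 16 * e2 - e3 - e4 - 30 * e0) / 48
  -- second polarization: linear in each of v, w
  have star2 : ∀ u v w : Fin l → ℝ,
      ∑ i, (((A i).mulVec u ⬝ᵥ u) * ((A i).mulVec v ⬝ᵥ w)
            + 2 * ((A i).mulVec u ⬝ᵥ v) * ((A i).mulVec u ⬝ᵥ w))
        = (u ⬝ᵥ u) * (v ⬝ᵥ w) + 2 * (u ⬝ᵥ v) * (u ⬝ᵥ w) := by
    intro u v w
    have h1 := star u (v + w)
    have h2 := star u v
    have h3 := star u w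
    simp only [mulVec_add, add_dotProduct, dotProduct_add] at h1
    simp only [show ∀ i : Fin N, (A i).mulVec w ⬝ᵥ v = (A i).mulVec v ⬝ᵥ w
      from fun i => hsym i v w] at h1
    rw [show w ⬝ᵥ v = v ⬝ᵥ w from dotProduct_comm _ _] at h1
    have hexp : ∑ i, (((A i).mulVec u ⬝ᵥ u) * ((A i).mulVec v ⬝ᵥ v + (A i).mulVec v ⬝ᵥ w
          + ((A i).mulVec v ⬝ᵥ w + (A i).mulVec w ⬝ᵥ w))
          + 2 * ((A i).mulVec u ⬝ᵥ v + (A i).mulVec u ⬝ᵥ w) ^ 2)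
        = (∑ i, (((A i).mulVec u ⬝ᵥ u) * ((A i).mulVec v ⬝ᵥ v)
            + 2 * ((A i).mulVec u ⬝ᵥ v) ^ 2))
        + (∑ i, (((A i).mulVec u ⬝ᵥ u) * ((A i).mulVec w ⬝ᵥ w)
            + 2 * ((A i).mulVec u ⬝ᵥ w) ^ 2))
        + 2 * ∑ i, (((A i).mulVec u ⬝ᵥ u) * ((A i).mulVec v ⬝ᵥ w)
            + 2 * ((A i).mulVec u ⬝ᵥ v) * ((A i).mulVec u ⬝ᵥ w)) := by
      simp only [Finset.mul_sum, ← Finset.sum_add_distrib]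
      refine Finset.sum_congr rfl fun i _ => ?_
      ring
    rw [hexp, h2, h3] at h1
    linear_combination h1 / 2
  -- basis vector computations
  have hb : ∀ i (j k : Fin l),
      (A i).mulVec (Pi.single j 1) ⬝ᵥ (Pi.single k (1:ℝ)) = A i k j := by
    intro i j k
    simp [mulVec_single, dotProduct_single]
  have hdot : ∀ j k : Fin l,
      (Pi.single j (1:ℝ)) ⬝ᵥ (Pi.single k 1) = if j = k then 1 else 0 := by
    intro j k
    rcases eq_or_ne j k with h | h
    · subst h; simp [dotProduct_single]
    · simp [dotProduct_single, Pi.single_apply, h, Ne.symm h]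
  have htrace : ∀ i, Matrix.trace (A i) = ∑ p, A i p p := fun i => rfl
  have part1 : (∑ i, ((2 : ℝ) • (A i * A i) + (Matrix.trace (A i)) • A i)
      = ((2 + (l : ℝ)) • (1 : Matrix (Fin l) (Fin l) ℝ))) := by
    ext j k
    have hsum := Finset.sum_congr rfl
      (fun p (_ : p ∈ (Finset.univ : Finset (Fin l))) =>
        star2 (Pi.single p 1) (Pi.single j 1) (Pi.single k 1))
    rw [Finset.sum_comm] at hsum
    have hL : ∑ i, ∑ p : Fin l, (((A i).mulVec (Pi.single p 1) ⬝ᵥ (Pi.single p 1))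
              * ((A i).mulVec (Pi.single j 1) ⬝ᵥ (Pi.single k 1))
            + 2 * ((A i).mulVec (Pi.single p 1) ⬝ᵥ (Pi.single j 1))
              * ((A i).mulVec (Pi.single p 1) ⬝ᵥ (Pi.single k 1)))
        = ∑ i, ((∑ p, A i p p) * A i k j + 2 * ∑ p, A i j p * A i k p) := by
      refine Finset.sum_congr rfl fun i _ => ?_
      simp only [hb]
      rw [Finset.sum_add_distrib, ← Finset.sum_mul, Finset.mul_sum]
      refine congrArg₂ (· + ·) rfl ?_
      refine Finset.sum_congr rfl fun p _ => by ring
    have hR : ∑ p : Fin l, (((Pi.single p (1:ℝ)) ⬝ᵥ (Pi.single p 1))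
            * ((Pi.single j 1) ⬝ᵥ (Pi.single k 1))
          + 2 * ((Pi.single p 1) ⬝ᵥ (Pi.single j 1)) * ((Pi.single p 1) ⬝ᵥ (Pi.single k 1)))
        = (l : ℝ) * (if j = k then 1 else 0) + 2 * (if j = k then 1 else 0) := by
      simp only [hdot]
      rw [Finset.sum_add_distrib]
      congr 1
      · simp
      · rcases eq_or_ne j k with h | h
        · subst h
          simp only [show ∀ p : Fin l, (2:ℝ) * (if p = j then 1 else 0) * (if p = j then 1 else 0)
              = if p = j then 2 else 0 from fun p => by split <;> ring]
          simp
        · have hz : ∀ p : Fin l, (2:ℝ) * (if p = j then 1 else 0) * (if p = k then 1 else 0)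
              = 0 := by
            intro p
            rcases eq_or_ne p j with hp | hp
            · subst hp
              simp [h]
            · simp [hp]
          simp only [hz]
          simp [h]
    rw [hL, hR] at hsum
    have hAA : ∀ i, (A i * A i) j k = ∑ p, A i j p * A i k p := by
      intro i
      rw [Matrix.mul_apply]
      exact Finset.sum_congr rfl fun p _ => by rw [hAt i p k]
    simp only [Matrix.sum_apply, Matrix.add_apply, Matrix.smul_apply, Matrix.one_apply,
      smul_eq_mul]
    calc ∑ i, (2 * (A i * A i) j k + Matrix.trace (A i) * A i j k)
        = ∑ i, ((∑ p, A i p p) * A i k j + 2 * ∑ p, A i j p * A i k p) := by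
          refine Finset.sum_congr rfl fun i _ => ?_
          rw [hAA i, hAt i k j, htrace i]; ring
      _ = (l : ℝ) * (if j = k then 1 else 0) + 2 * (if j = k then 1 else 0) := hsum
      _ = (2 + (l:ℝ)) * (if j = k then 1 else 0) := by ring
  refine ⟨part1, ?_⟩
  intro m hm
  have htr := congrArg Matrix.trace part1
  rw [Matrix.trace_sum] at htr
  simp only [Matrix.trace_add, Matrix.trace_smul, Matrix.trace_one, smul_eq_mul,
    Finset.sum_add_distrib, Fintype.card_fin] at htr
  have hsq : ∑ i, Matrix.trace (A i) * Matrix.trace (A i)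
      = ∑ i, (Matrix.trace (A i)) ^ 2 :=
    Finset.sum_congr rfl fun i _ => by ring
  have h2 : ∑ i, (2:ℝ) * Matrix.trace (A i * A i)
      = 2 * ∑ i, Matrix.trace (A i * A i) := by
    rw [Finset.mul_sum]
  rw [hsq, h2, hm] at htr
  linarith [htr]
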